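/- arXiv:1403.5357 — 3 statements merged into one kernel-verified Lean document; each statement's English description precedes it below -/
import Mathlib

section
/- For every ε > 0 and every n ∈ ℕ there exists δ > 0 with the following property: for every unital C*-algebra A and all projections q_1, …, q_n in A satisfying ‖q_i q_j‖ < δ for all i ≠ j, there exist mutually orthogonal projections p_1, …, p_n in A (i.e. p_i p_j = 0 for i ≠ j) such that ‖p_i − q_i‖ < ε for all 1 ≤ i ≤ n. -/
/-!
Induction on the number of projections. If `p₁, …, pₖ` are mutually orthogonal projections with
`pⱼ` close to `qⱼ`, put `s = ∑ pⱼ`; then `‖s qₖ₊₁‖` is small, so the compression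
`a = (1 - s) qₖ₊₁ (1 - s)` is a self-adjoint element close to `qₖ₊₁` with `‖a² - a‖` small and
`s a = a s = 0`. Its spectrum then avoids `1/2`, and rounding the spectrum to `{0, 1}` by the
continuous functional calculus gives a projection `pₖ₊₁` close to `a`, hence to `qₖ₊₁`, which is
still annihilated by `s`, i.e. orthogonal to `p₁, …, pₖ`.
-/

lemma abs_ite_half_lt_sub_le (t : ℝ) :
    |(if 1 / 2 < t then 1 else 0) - t| ≤ 2 * |t ^ 2 - t| := by
  rw [show t ^ 2 - t = t * (t - 1) by ring, abs_mul]
  split_ifs with h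
  · have : 1 / 2 ≤ |t| := by rw [abs_of_pos (by linarith)]; linarith
    rw [abs_sub_comm]; nlinarith [abs_nonneg (t - 1)]
  · have : 1 / 2 ≤ |t - 1| := by rw [abs_of_neg (by linarith)]; linarith
    rw [zero_sub, abs_neg]; nlinarith [abs_nonneg t]

lemma continuousOn_ite_half_lt :
    ContinuousOn (fun t : ℝ => if 1 / 2 < t then (1 : ℝ) else 0) {1 / 2}ᶜ := by
  refine continuousOn_of_forall_continuousAt fun t ht => ?_
  rcases lt_or_gt_of_ne ht with h | h
  · exact (continuousAt_const (y := (0 : ℝ))).congr <|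
      (eventually_lt_nhds h).mono fun s hs => (if_neg hs.not_gt).symm
  · exact (continuousAt_const (y := (1 : ℝ))).congr <|
      (eventually_gt_nhds h).mono fun s hs => (if_pos hs).symm

section NormedRing

variable {R : Type*} [NormedRing R]

lemma norm_mul_le_norm_sub_add_norm_mul {p q r : R} (hr : ‖r‖ ≤ 1) :
    ‖p * r‖ ≤ ‖p - q‖ + ‖q * r‖ :=
  calc ‖p * r‖ = ‖(p - q) * r + q * r‖ := by rw [sub_mul, sub_add_cancel]
    _ ≤ ‖p - q‖ * ‖r‖ + ‖q * r‖ := (norm_add_le _ _).trans (by gcongr; exact norm_mul_le _ _)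
    _ ≤ ‖p - q‖ + ‖q * r‖ := by gcongr; exact mul_le_of_le_one_right (norm_nonneg _) hr

lemma IsIdempotentElem.norm_sq_sub_self_le {q a : R} (hq : IsIdempotentElem q) (hq1 : ‖q‖ ≤ 1)
    {m : ℝ} (h : ‖q - a‖ ≤ m) (hm : m ≤ 1) : ‖a ^ 2 - a‖ ≤ 4 * m := by
  have hdecomp : a ^ 2 - a = a * (a - q) + (a - q) * q + (q - a) := by
    rw [sq, show a * (a - q) + (a - q) * q + (q - a) = a * a - q * q + (q - a) by noncomm_ring,
      hq.eq]
    abel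
  have hm0 : 0 ≤ m := (norm_nonneg _).trans h
  have haq : ‖a - q‖ ≤ m := by rwa [norm_sub_rev]
  have ha : ‖a‖ ≤ 1 + m :=
    calc ‖a‖ = ‖q - (q - a)‖ := by rw [sub_sub_cancel]
      _ ≤ ‖q‖ + ‖q - a‖ := norm_sub_le _ _
      _ ≤ 1 + m := add_le_add hq1 h
  calc ‖a ^ 2 - a‖ ≤ ‖a‖ * ‖a - q‖ + ‖a - q‖ * ‖q‖ + ‖q - a‖ := by
        rw [hdecomp]
        exact (norm_add₃_le ..).trans (add_le_add_three (norm_mul_le _ _) (norm_mul_le _ _) le_rfl)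
    _ ≤ (1 + m) * m + m * 1 + m := by gcongr
    _ ≤ 4 * m := by nlinarith

end NormedRing

section CStarAlgebra

variable {A : Type*} [CStarAlgebra A]

lemma IsSelfAdjoint.mul_cfcₙ_eq_zero {a x : A} {f : ℝ → ℝ} (ha : IsSelfAdjoint a)
    (hf : ContinuousOn f (quasispectrum ℝ a)) (hf0 : f 0 = 0) (h : x * a = 0) :
    x * cfcₙ f a = 0 := by
  rw [cfcₙ_apply f a hf hf0 ha]
  refine ContinuousMapZero.mul_nonUnitalStarAlgHom_apply_eq_zero _ x ?_ ?_
    (cfcₙHom_continuous ha) _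
  all_goals simpa only [star_trivial, cfcₙHom_id ha]

lemma IsSelfAdjoint.cfcₙ_mul_eq_zero {a x : A} {f : ℝ → ℝ} (ha : IsSelfAdjoint a)
    (hf : ContinuousOn f (quasispectrum ℝ a)) (hf0 : f 0 = 0) (h : a * x = 0) :
    cfcₙ f a * x = 0 := by
  have hstar : star x * a = 0 := by rw [← ha.star_eq, ← star_mul, h, star_zero]
  simpa [star_mul, (cfcₙ_predicate f a).star_eq] using
    congr(star $(ha.mul_cfcₙ_eq_zero hf hf0 hstar))

lemma IsSelfAdjoint.exists_isStarProjection_norm_sub_le {a : A} (ha : IsSelfAdjoint a)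
    (h : ‖a ^ 2 - a‖ < 1 / 4) :
    ∃ p : A, IsStarProjection p ∧ ‖p - a‖ ≤ 2 * ‖a ^ 2 - a‖ ∧
      (∀ x, x * a = 0 → x * p = 0) ∧ (∀ x, a * x = 0 → p * x = 0) := by
  set f : ℝ → ℝ := fun t => if 1 / 2 < t then 1 else 0
  have hspec (t) (ht : t ∈ spectrum ℝ a) : |t ^ 2 - t| ≤ ‖a ^ 2 - a‖ := by
    have hcfc : cfc (fun t : ℝ => t ^ 2 - t) a = a ^ 2 - a := by
      rw [cfc_sub _ _ a, cfc_pow (fun t : ℝ => t) 2 a, cfc_id' ℝ a]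
    rw [← hcfc, ← Real.norm_eq_abs]
    exact norm_apply_le_norm_cfc (fun t : ℝ => t ^ 2 - t) a ht
  have hf0 : f 0 = 0 := by norm_num [f]
  have hf : ContinuousOn f (quasispectrum ℝ a) := by
    refine continuousOn_ite_half_lt.mono fun t ht (h12 : t = 1 / 2) => ?_
    rw [quasispectrum_eq_spectrum_union_zero, h12] at ht
    rcases ht with ht | ht
    · have := hspec _ ht
      norm_num at this
      linarith
    · norm_num at ht
  have hf' : ContinuousOn f (spectrum ℝ a) := hf.mono (spectrum_subset_quasispectrum ℝ a)
  refine ⟨cfc f a, ⟨?_, cfc_predicate f a⟩, ?_, fun x hx => ?_, fun x hx => ?_⟩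
  · rw [IsIdempotentElem, ← cfc_mul f f a]
    exact cfc_congr fun t _ => by simp only [f]; split_ifs <;> norm_num
  · have hsub : cfc f a - a = cfc (fun t => f t - t) a := by
      rw [cfc_sub f (fun t => t) a, cfc_id' ℝ a]
    rw [hsub]
    exact norm_cfc_le (by positivity) fun t ht =>
      (abs_ite_half_lt_sub_le t).trans (by gcongr; exact hspec t ht)
  · rw [← cfcₙ_eq_cfc hf hf0]; exact ha.mul_cfcₙ_eq_zero hf hf0 hx
  · rw [← cfcₙ_eq_cfc hf hf0]; exact ha.cfcₙ_mul_eq_zero hf hf0 hx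

lemma OrthogonalIdempotents.isStarProjection_sum {ι : Type*} {e : ι → A}
    (he : OrthogonalIdempotents e) (he' : ∀ i, IsSelfAdjoint (e i)) (s : Finset ι) :
    IsStarProjection (∑ i ∈ s, e i) :=
  ⟨he.isIdempotentElem_sum, isSelfAdjoint_sum s fun i _ => he' i⟩

lemma IsStarProjection.norm_sub_one_sub_mul_mul_one_sub_le {s q : A} (hs : IsStarProjection s)
    (hq : IsSelfAdjoint q) : ‖q - (1 - s) * q * (1 - s)‖ ≤ 2 * ‖s * q‖ := by
  have hdecomp : q - (1 - s) * q * (1 - s) = s * q + (1 - s) * star (s * q) := by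
    rw [star_mul, hs.isSelfAdjoint.star_eq, hq.star_eq]; noncomm_ring
  calc ‖q - (1 - s) * q * (1 - s)‖ ≤ ‖s * q‖ + ‖1 - s‖ * ‖star (s * q)‖ := by
        rw [hdecomp]; exact (norm_add_le _ _).trans (by gcongr; exact norm_mul_le _ _)
    _ ≤ ‖s * q‖ + 1 * ‖s * q‖ := by
        rw [norm_star]; gcongr; exact hs.one_sub.norm_le
    _ = 2 * ‖s * q‖ := by ring

lemma IsStarProjection.exists_isStarProjection_orthogonal_norm_sub_le {s q : A}
    (hs : IsStarProjection s) (hq : IsStarProjection q) (h : ‖s * q‖ < 1 / 32) :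
    ∃ p : A, IsStarProjection p ∧ p * s = 0 ∧ s * p = 0 ∧ ‖p - q‖ ≤ 18 * ‖s * q‖ := by
  set a := (1 - s) * q * (1 - s)
  have ha : IsSelfAdjoint a := by
    simpa only [a, hs.one_sub.isSelfAdjoint.star_eq] using hq.isSelfAdjoint.conjugate (1 - s)
  have hqa : ‖q - a‖ ≤ 2 * ‖s * q‖ := hs.norm_sub_one_sub_mul_mul_one_sub_le hq.isSelfAdjoint
  have haa : ‖a ^ 2 - a‖ ≤ 4 * (2 * ‖s * q‖) :=
    hq.isIdempotentElem.norm_sq_sub_self_le (hq.norm_le q) hqa (by linarith)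
  obtain ⟨p, hp, hpa, hp_left, hp_right⟩ := ha.exists_isStarProjection_norm_sub_le (by linarith)
  have hsa : s * a = 0 := by simp only [a, ← mul_assoc, hs.mul_one_sub_self, zero_mul]
  have has : a * s = 0 := by simp only [a, mul_assoc, hs.one_sub_mul_self, mul_zero]
  refine ⟨p, hp, hp_right s has, hp_left s hsa, ?_⟩
  calc ‖p - q‖ = ‖(p - a) - (q - a)‖ := by rw [sub_sub_sub_cancel_right]
    _ ≤ ‖p - a‖ + ‖q - a‖ := norm_sub_le _ _
    _ ≤ 18 * ‖s * q‖ := by linarith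

/-- `K (n + 1) = 18 (n + 1) (K n + 1)`: with `‖pⱼ - qⱼ‖ ≤ K n δ` for `j ≤ n`, the sum `s` of the
`pⱼ` has `‖s qₙ₊₁‖ ≤ n (K n + 1) δ`, and the new projection lies within `18 ‖s qₙ₊₁‖` of `qₙ₊₁`. -/
def orthogonalizationBound : ℕ → ℝ
  | 0 => 0
  | n + 1 => 18 * (n + 1) * (orthogonalizationBound n + 1)

lemma orthogonalizationBound_nonneg (n : ℕ) : 0 ≤ orthogonalizationBound n := by
  cases n with
  | zero => exact le_rfl
  | succ n =>
    have := orthogonalizationBound_nonneg n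
    simp only [orthogonalizationBound]
    positivity

lemma orthogonalizationBound_le_succ (n : ℕ) :
    orthogonalizationBound n ≤ orthogonalizationBound (n + 1) := by
  have := orthogonalizationBound_nonneg n
  simp only [orthogonalizationBound]
  nlinarith [(n.cast_nonneg : (0 : ℝ) ≤ n)]

theorem exists_orthogonalIdempotents_norm_sub_le {n : ℕ} {δ : ℝ} (hδ : 0 ≤ δ)
    (hsmall : orthogonalizationBound n * δ < 1 / 2) (q : Fin n → A)
    (hq : ∀ i, IsStarProjection (q i)) (hqq : Pairwise fun i j => ‖q i * q j‖ ≤ δ) :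
    ∃ p : Fin n → A, OrthogonalIdempotents p ∧ (∀ i, IsSelfAdjoint (p i)) ∧
      ∀ i, ‖p i - q i‖ ≤ orthogonalizationBound n * δ := by
  induction n with
  | zero => exact ⟨finZeroElim, ⟨finZeroElim, finZeroElim⟩, finZeroElim, finZeroElim⟩
  | succ n ih =>
    set K := orthogonalizationBound n
    have hK : 0 ≤ K := orthogonalizationBound_nonneg n
    have hKsucc : orthogonalizationBound (n + 1) = 18 * (n + 1) * (K + 1) := rfl
    obtain ⟨p, hp, hp_sa, hpq⟩ :=
      ih (by nlinarith [orthogonalizationBound_le_succ n]) (q ∘ Fin.succ) (fun i => hq _)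
        fun i j hij => hqq ((Fin.succ_injective _).ne hij)
    have hsq : ‖(∑ i, p i) * q 0‖ ≤ n * ((K + 1) * δ) :=
      calc ‖(∑ i, p i) * q 0‖ ≤ ∑ i, ‖p i * q 0‖ := by
            rw [Finset.sum_mul]; exact norm_sum_le _ _
        _ ≤ ∑ i : Fin n, (K + 1) * δ := Finset.sum_le_sum fun i _ => by
            have hpi : ‖p i - q i.succ‖ ≤ K * δ := hpq i
            linarith [norm_mul_le_norm_sub_add_norm_mul (p := p i) (q := q i.succ)
              ((hq 0).norm_le _), hqq (Fin.succ_ne_zero i)]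
        _ = n * ((K + 1) * δ) := by simp
    have hn : (n : ℝ) * ((K + 1) * δ) < 1 / 32 := by
      rw [hKsucc] at hsmall; nlinarith
    obtain ⟨P, hP, hPs, hsP, hPq⟩ := (hp.isStarProjection_sum hp_sa Finset.univ)
      |>.exists_isStarProjection_orthogonal_norm_sub_le (hq 0) (hsq.trans_lt hn)
    refine ⟨Fin.cons P p, ?_, Fin.cases hP.isSelfAdjoint hp_sa, Fin.cases ?_ fun i => ?_⟩
    · convert (hp.option P hP.isIdempotentElem hPs hsP).embedding (finSuccEquiv n).toEmbedding
      ext i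
      cases i using Fin.cases <;> simp
    · rw [Fin.cons_zero, hKsucc]
      nlinarith
    · rw [Fin.cons_succ]
      exact (hpq i).trans (mul_le_mul_of_nonneg_right (orthogonalizationBound_le_succ n) hδ)

end CStarAlgebra

/-- Almost mutually orthogonal projections in a unital C*-algebra can be
perturbed to exactly mutually orthogonal projections. -/
theorem stmt_4 (ε : ℝ) (hε : 0 < ε) (n : ℕ) :
    ∃ δ : ℝ, 0 < δ ∧
      ∀ (A : Type) [NormedRing A] [StarRing A] [CStarRing A]
        [NormedAlgebra ℂ A] [StarModule ℂ A] [CompleteSpace A],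
        ∀ q : Fin n → A,
          (∀ i, IsSelfAdjoint (q i) ∧ q i ^ 2 = q i) →
          (∀ i j, i ≠ j → ‖q i * q j‖ < δ) →
          ∃ p : Fin n → A,
            (∀ i, IsSelfAdjoint (p i) ∧ p i ^ 2 = p i) ∧
            (∀ i j, i ≠ j → p i * p j = 0) ∧
            (∀ i, ‖p i - q i‖ < ε) := by
  set K := orthogonalizationBound n
  set c := min ε (1 / 2)
  have hc : 0 < c := lt_min hε one_half_pos
  have hK : 0 ≤ K := orthogonalizationBound_nonneg n
  have hKδ : K * (c / (K + 1)) < c := by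
    rw [mul_div_assoc', div_lt_iff₀ (by positivity)]; nlinarith
  refine ⟨c / (K + 1), by positivity, fun A _ _ _ _ _ _ q hq hqq => ?_⟩
  let _ : CStarAlgebra A := { }
  obtain ⟨p, hp, hp_sa, hpq⟩ := exists_orthogonalIdempotents_norm_sub_le (by positivity)
    (hKδ.trans_le (min_le_right _ _)) q
    (fun i => ⟨by rw [IsIdempotentElem, ← sq, (hq i).2], (hq i).1⟩)
    fun i j hij => (hqq i j hij).le
  exact ⟨p, fun i => ⟨hp_sa i, by rw [sq, (hp.idem i).eq]⟩, fun i j hij => hp.ortho hij,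
    fun i => (hpq i).trans_lt (hKδ.trans_le (min_le_left _ _))⟩
end

section
/- Let ε > 0, let N, N' ∈ ℕ be positive, let {e_{i,j} : 1 ≤ i, j ≤ N} be the standard matrix units of M_N, and let x ∈ M_N ⊗ M_{N'} (realized as complex matrices indexed by (Fin N × Fin N') via the Kronecker product) satisfy ‖x(e_{i,j} ⊗ 1_{N'}) − (e_{i,j} ⊗ 1_{N'})x‖ < ε for all 1 ≤ i, j ≤ N. Then there exists a matrix b ∈ M_{N'} such that ‖x − 1_N ⊗ b‖ < 10 N³ ε. -/
open scoped Matrix.Norms.L2Operator Kronecker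

/-!
Fix `j` and let `b` be the `(j, j)` block of `x`. Writing `E i k = e_{i,k} ⊗ 1`, we have
`∑ i, E i j * E j i = 1` and `∑ i, E i j * x * E j i = 1 ⊗ b`, hence
`1 ⊗ b - x = ∑ i, E i j * (x * E j i - E j i * x)`. The `E i k` are partial isometries, so of
norm at most `1`, and therefore `‖x - 1 ⊗ b‖ ≤ N ε`.
-/

theorem norm_le_one_of_isStarProjection_star_mul_self {E : Type*} [NonUnitalNormedRing E]
    [StarRing E] [CStarRing E] {a : E} (ha : IsStarProjection (star a * a)) : ‖a‖ ≤ 1 := by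
  have h := ha.norm_le
  rw [CStarRing.norm_star_mul_self] at h
  nlinarith [norm_nonneg a]

namespace Matrix

theorem sum_kronecker {α ι l m n p : Type*} [NonUnitalNonAssocSemiring α] [Fintype ι]
    (A : ι → Matrix l m α) (B : Matrix n p α) : (∑ i, A i) ⊗ₖ B = ∑ i, A i ⊗ₖ B := by
  ext; simp [sum_apply, Finset.sum_mul]

variable {α 𝕜 ι κ : Type*} [Fintype ι] [DecidableEq ι] [Fintype κ] [DecidableEq κ]

theorem single_kronecker_one_mul_mul_single_kronecker_one [CommSemiring α]
    (x : Matrix (ι × κ) (ι × κ) α) (i j : ι) :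
    (single i j (1 : α) ⊗ₖ (1 : Matrix κ κ α)) * x * (single j i 1 ⊗ₖ 1) =
      single i i 1 ⊗ₖ x.submatrix (Prod.mk j) (Prod.mk j) := by
  ext ⟨p, a⟩ ⟨q, c⟩
  by_cases hp : i = p <;>
    simp [mul_apply, single_apply, one_apply, Fintype.sum_prod_type, ite_and, hp]

theorem sum_single_kronecker_one_mul_mul_single_kronecker_one [CommSemiring α]
    (x : Matrix (ι × κ) (ι × κ) α) (j : ι) :
    ∑ i, (single i j (1 : α) ⊗ₖ (1 : Matrix κ κ α)) * x * (single j i 1 ⊗ₖ 1) =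
      1 ⊗ₖ x.submatrix (Prod.mk j) (Prod.mk j) := by
  simp only [single_kronecker_one_mul_mul_single_kronecker_one, ← sum_kronecker, sum_single_one]

theorem sum_single_kronecker_one_mul_single_kronecker_one [CommSemiring α] (j : ι) :
    ∑ i, (single i j (1 : α) ⊗ₖ (1 : Matrix κ κ α)) * (single j i 1 ⊗ₖ 1) = 1 := by
  simp only [← mul_kronecker_mul, single_mul_single_same, mul_one, ← sum_kronecker,
    sum_single_one, one_kronecker_one]

theorem isStarProjection_single_kronecker_one [CommSemiring α] [StarRing α] (j : ι) :
    IsStarProjection (single j j (1 : α) ⊗ₖ (1 : Matrix κ κ α)) where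
  isIdempotentElem := by
    rw [IsIdempotentElem, ← mul_kronecker_mul, single_mul_single_same, mul_one, mul_one]
  isSelfAdjoint := by
    rw [IsSelfAdjoint, star_eq_conjTranspose, conjTranspose_kronecker, conjTranspose_single,
      conjTranspose_one, star_one]

variable [RCLike 𝕜]

theorem norm_single_kronecker_one_le (i j : ι) :
    ‖single i j (1 : 𝕜) ⊗ₖ (1 : Matrix κ κ 𝕜)‖ ≤ 1 := by
  apply norm_le_one_of_isStarProjection_star_mul_self
  rw [star_eq_conjTranspose, conjTranspose_kronecker, conjTranspose_single, conjTranspose_one,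
    ← mul_kronecker_mul, star_one, single_mul_single_same, mul_one, mul_one]
  exact isStarProjection_single_kronecker_one j

theorem norm_sub_one_kronecker_submatrix_le (x : Matrix (ι × κ) (ι × κ) 𝕜) (j : ι) {ε : ℝ}
    (hx : ∀ i, ‖x * (single j i 1 ⊗ₖ 1) - (single j i 1 ⊗ₖ 1) * x‖ ≤ ε) :
    ‖x - 1 ⊗ₖ x.submatrix (Prod.mk j) (Prod.mk j)‖ ≤ Fintype.card ι * ε := by
  set E : ι → ι → Matrix (ι × κ) (ι × κ) 𝕜 := fun i k => single i k 1 ⊗ₖ 1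
  have decomp : 1 ⊗ₖ x.submatrix (Prod.mk j) (Prod.mk j) - x =
      ∑ i, E i j * (x * E j i - E j i * x) := by
    simp only [mul_sub, ← mul_assoc, Finset.sum_sub_distrib, ← Finset.sum_mul, E,
      sum_single_kronecker_one_mul_mul_single_kronecker_one,
      sum_single_kronecker_one_mul_single_kronecker_one, one_mul]
  calc ‖x - 1 ⊗ₖ x.submatrix (Prod.mk j) (Prod.mk j)‖
      = ‖∑ i, E i j * (x * E j i - E j i * x)‖ := by rw [norm_sub_rev, decomp]
    _ ≤ ∑ i, ‖E i j‖ * ‖x * E j i - E j i * x‖ :=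
      (norm_sum_le _ _).trans (Finset.sum_le_sum fun i _ => l2_opNorm_mul _ _)
    _ ≤ ∑ _i : ι, ε := Finset.sum_le_sum fun i _ =>
      (mul_le_of_le_one_left (norm_nonneg _) (norm_single_kronecker_one_le i j)).trans (hx i)
    _ = Fintype.card ι * ε := by simp

end Matrix

theorem stmt_5_general (ε : ℝ) (hε : 0 < ε) (N N' : ℕ) (hN : 0 < N)
    (x : Matrix (Fin N × Fin N') (Fin N × Fin N') ℂ)
    (hx : ∀ i j : Fin N,
      ‖x * (Matrix.single i j (1 : ℂ) ⊗ₖ (1 : Matrix (Fin N') (Fin N') ℂ)) -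
        (Matrix.single i j (1 : ℂ) ⊗ₖ (1 : Matrix (Fin N') (Fin N') ℂ)) * x‖ < ε) :
    ∃ b : Matrix (Fin N') (Fin N') ℂ,
      ‖x - (1 : Matrix (Fin N) (Fin N) ℂ) ⊗ₖ b‖ < 10 * (N : ℝ) ^ 3 * ε := by
  let j : Fin N := ⟨0, hN⟩
  refine ⟨x.submatrix (Prod.mk j) (Prod.mk j), ?_⟩
  have hclose := Matrix.norm_sub_one_kronecker_submatrix_le x j fun i => (hx j i).le
  rw [Fintype.card_fin] at hclose
  have hN3 : (N : ℝ) ≤ N ^ 3 := le_self_pow₀ (by exact_mod_cast hN) (by norm_num)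
  calc _ ≤ (N : ℝ) * ε := hclose
    _ < 10 * (N : ℝ) ^ 3 * ε := by nlinarith [mul_pos (pow_pos (Nat.cast_pos.2 hN) 3) hε]

/-- An element of `M_N ⊗ M_{N'}` that almost commutes with the matrix units
of the first factor is close to an element of the form `1_N ⊗ b`. -/
theorem stmt_5 (ε : ℝ) (hε : 0 < ε) (N N' : ℕ) (hN : 0 < N) (hN' : 0 < N')
    (x : Matrix (Fin N × Fin N') (Fin N × Fin N') ℂ)
    (hx : ∀ i j : Fin N,
      ‖x * (Matrix.single i j (1 : ℂ) ⊗ₖ (1 : Matrix (Fin N') (Fin N') ℂ)) -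
        (Matrix.single i j (1 : ℂ) ⊗ₖ (1 : Matrix (Fin N') (Fin N') ℂ)) * x‖ < ε) :
    ∃ b : Matrix (Fin N') (Fin N') ℂ,
      ‖x - (1 : Matrix (Fin N) (Fin N) ℂ) ⊗ₖ b‖ < 10 * (N : ℝ) ^ 3 * ε :=
  stmt_5_general ε hε N N' hN x hx
end

section
/- For every integer k ≥ 1 there exists δ > 0 with the following property: for every positive integer N, every unitary u ∈ M_N with u^k = 1, and all nonzero mutually orthogonal projections p_1, …, p_k ∈ M_N satisfying ‖u p_i u* − p_{i+1}‖ < δ for 1 ≤ i ≤ k (with the convention p_{k+1} = p_1), every k-th root of unity e^{2πij/k} (0 ≤ j ≤ k−1) is an eigenvalue of u; that is, for each such j there exists a nonzero vector w ∈ ℂ^N with u·w = e^{2πij/k}·w. -/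
/-!
Averaging the powers of `u` against a `k`-th root of unity gives an element
`e = ∑_{m<k} (c⁻¹ u)^m` with `u e = c e` (a multiple of the spectral projection of `u` at `c`),
so it suffices to show `e ≠ 0`. Compress by `p₀`: the `m = 0` term is `p₀`, and for `0 < m < k`
the telescoped estimate `‖u^m p₀ u^{*m} - p_m‖ ≤ m δ` together with `p₀ p_m = 0` forces
`‖p₀ u^m p₀‖ ≤ m δ`. Hence `‖p₀ e p₀ - p₀‖ ≤ k² δ < 1 = ‖p₀‖`.
-/

open Matrix Finset
open scoped Matrix.Norms.L2Operator

section CStarRing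

variable {A : Type*} [NormedRing A] [StarRing A] [CStarRing A]

lemma IsStarProjection.norm_eq_one {p : A} (hp : IsStarProjection p) (h0 : p ≠ 0) :
    ‖p‖ = 1 := by
  have h : ‖p‖ * ‖p‖ = ‖p‖ * 1 := by
    rw [← CStarRing.norm_star_mul_self, hp.isSelfAdjoint.star_eq, hp.isIdempotentElem.eq,
      mul_one]
  exact mul_left_cancel₀ (norm_ne_zero_iff.mpr h0) h

lemma norm_mul_mul_star_of_mem_unitary {u : A} (hu : u ∈ unitary A) (x : A) :
    ‖u * x * star u‖ = ‖x‖ := by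
  rw [CStarRing.norm_mul_mem_unitary _ (Unitary.star_mem hu), CStarRing.norm_mem_unitary_mul _ hu]

lemma norm_pow_mul_mul_star_pow_sub_le {ι : Type*} [AddMonoidWithOne ι] {u : A}
    (hu : u ∈ unitary A) {p : ι → A} {δ : ℝ} (h : ∀ i, ‖u * p i * star u - p (i + 1)‖ ≤ δ)
    (i : ι) (m : ℕ) : ‖u ^ m * p i * star u ^ m - p (i + m)‖ ≤ m * δ := by
  induction m with
  | zero => simp
  | succ m ih =>
    have hsplit : u ^ (m + 1) * p i * star u ^ (m + 1) - p (i + ↑(m + 1)) =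
        u * (u ^ m * p i * star u ^ m - p (i + m)) * star u +
          (u * p (i + m) * star u - p (i + m + 1)) := by
      rw [Nat.cast_succ, ← add_assoc, pow_succ', pow_succ]
      noncomm_ring
    calc _ ≤ ‖u ^ m * p i * star u ^ m - p (i + m)‖ + δ := by
          rw [hsplit, ← norm_mul_mul_star_of_mem_unitary hu (u ^ m * p i * star u ^ m - _)]
          exact norm_add_le_of_le le_rfl (h _)
      _ ≤ m * δ + δ := by gcongr
      _ = (m + 1 : ℕ) * δ := by push_cast; ring

lemma IsStarProjection.norm_mul_mul_self_le {p q u : A} (hp : IsStarProjection p)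
    (hu : u ∈ unitary A) (hpq : p * q = 0) : ‖p * u * p‖ ≤ ‖u * p * star u - q‖ := by
  set x := u * p * star u - q
  have hcompress : p * u * p = p * x * (u * p) := by
    calc p * u * p = p * u * p * (star u * u) * p - p * q * (u * p) := by
          rw [Unitary.star_mul_self_of_mem hu, mul_one, mul_assoc (p * u), hp.isIdempotentElem.eq,
            hpq, zero_mul, sub_zero]
      _ = p * x * (u * p) := by simp only [x]; noncomm_ring
  calc ‖p * u * p‖ = ‖p * x * (u * p)‖ := by rw [hcompress]
    _ ≤ ‖p‖ * ‖x‖ * ‖u * p‖ := norm_mul₃_le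
    _ ≤ 1 * ‖x‖ * 1 := by
        rw [CStarRing.norm_mem_unitary_mul _ hu]
        gcongr <;> exact hp.norm_le
    _ = ‖x‖ := by ring

open Fin.NatCast in
lemma norm_proj_mul_pow_mul_proj_le {k : ℕ} [NeZero k] {u : A} (hu : u ∈ unitary A)
    {p : Fin k → A} (hp0 : IsStarProjection (p 0)) (horth : ∀ j ≠ 0, p 0 * p j = 0) {δ : ℝ}
    (hδ : ∀ i, ‖u * p i * star u - p (i + 1)‖ ≤ δ) {m : ℕ} (hm0 : m ≠ 0) (hmk : m < k) :
    ‖p 0 * u ^ m * p 0‖ ≤ m * δ := by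
  have hm : (m : Fin k) ≠ 0 := by
    rw [Ne, Fin.ext_iff, Fin.val_cast_of_lt hmk]
    exact hm0
  calc ‖p 0 * u ^ m * p 0‖ ≤ ‖u ^ m * p 0 * star (u ^ m) - p m‖ :=
        hp0.norm_mul_mul_self_le (pow_mem hu m) (horth _ hm)
    _ ≤ m * δ := by
        simpa [star_pow] using norm_pow_mul_mul_star_pow_sub_le hu hδ 0 m

end CStarRing

lemma mul_geom_sum_eq_of_pow_eq_one {R : Type*} [Ring R] {x : R} {n : ℕ} (h : x ^ n = 1) :
    x * ∑ i ∈ range n, x ^ i = ∑ i ∈ range n, x ^ i := by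
  have hgeom := mul_neg_geom_sum x n
  rw [h, sub_self, sub_mul, one_mul, sub_eq_zero] at hgeom
  exact hgeom.symm

section CStarAlgebra

variable {A : Type*} [NormedRing A] [StarRing A] [CStarRing A] [NormedAlgebra ℂ A]

lemma norm_proj_mul_geom_sum_mul_proj_sub_le {k : ℕ} [NeZero k] {u : A} (hu : u ∈ unitary A)
    {p : Fin k → A} (hp0 : IsStarProjection (p 0)) (horth : ∀ j ≠ 0, p 0 * p j = 0) {δ : ℝ}
    (hδ : ∀ i, ‖u * p i * star u - p (i + 1)‖ ≤ δ) {ζ : ℂ} (hζ : ‖ζ‖ = 1) :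
    ‖p 0 * (∑ m ∈ range k, (ζ • u) ^ m) * p 0 - p 0‖ ≤ k ^ 2 * δ := by
  have hδ0 : 0 ≤ δ := (norm_nonneg _).trans (hδ 0)
  have hterm : ∀ m ∈ range (k - 1), ‖p 0 * (ζ • u) ^ (m + 1) * p 0‖ ≤ k * δ := fun m hm => by
    have hmk : m + 1 < k := by have := mem_range.mp hm; omega
    rw [smul_pow, mul_smul_comm, smul_mul_assoc, norm_smul, norm_pow, hζ, one_pow, one_mul]
    calc _ ≤ (m + 1 : ℕ) * δ :=
          norm_proj_mul_pow_mul_proj_le hu hp0 horth hδ m.succ_ne_zero hmk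
      _ ≤ k * δ := by gcongr
  have hrange : range k = range (k - 1 + 1) := by rw [Nat.sub_add_cancel NeZero.one_le]
  calc _ = ‖∑ m ∈ range (k - 1), p 0 * (ζ • u) ^ (m + 1) * p 0‖ := by
        rw [hrange, sum_range_succ', pow_zero, mul_add, add_mul, mul_one,
          hp0.isIdempotentElem.eq, add_sub_cancel_right, mul_sum, sum_mul]
    _ ≤ ∑ m ∈ range (k - 1), (k * δ : ℝ) := norm_sum_le_of_le _ hterm
    _ = (k - 1 : ℕ) * (k * δ) := by rw [sum_const, card_range, nsmul_eq_mul]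
    _ ≤ k * (k * δ) := by gcongr; exact_mod_cast Nat.sub_le k 1
    _ = k ^ 2 * δ := by ring

theorem exists_ne_zero_mul_eq_smul_of_approx_cyclic {k : ℕ} [NeZero k] {u : A}
    (hu : u ∈ unitary A) (huk : u ^ k = 1) {p : Fin k → A} (hp0 : IsStarProjection (p 0))
    (hp0_ne : p 0 ≠ 0) (horth : ∀ j ≠ 0, p 0 * p j = 0) {δ : ℝ}
    (hδ : ∀ i, ‖u * p i * star u - p (i + 1)‖ ≤ δ) (hkδ : k ^ 2 * δ < 1) {c : ℂ}
    (hc : c ^ k = 1) : ∃ e : A, e ≠ 0 ∧ u * e = c • e := by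
  have hc0 : c ≠ 0 := by
    rintro rfl
    simp [NeZero.ne k] at hc
  refine ⟨∑ m ∈ range k, (c⁻¹ • u) ^ m, fun he => ?_, ?_⟩
  · have hlt := (norm_proj_mul_geom_sum_mul_proj_sub_le hu hp0 horth hδ (ζ := c⁻¹)
      (by rw [norm_inv, Complex.norm_eq_one_of_pow_eq_one hc (NeZero.ne k), inv_one])).trans_lt hkδ
    rw [he, mul_zero, zero_mul, zero_sub, norm_neg, hp0.norm_eq_one hp0_ne] at hlt
    exact lt_irrefl _ hlt
  · have hfix := mul_geom_sum_eq_of_pow_eq_one (x := c⁻¹ • u) (n := k)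
      (by rw [smul_pow, inv_pow, hc, inv_one, one_smul, huk])
    rw [smul_mul_assoc] at hfix
    calc u * _ = c • c⁻¹ • (u * ∑ m ∈ range k, (c⁻¹ • u) ^ m) := by
          rw [smul_smul, mul_inv_cancel₀ hc0, one_smul]
      _ = _ := by rw [hfix]

end CStarAlgebra

lemma Matrix.exists_mulVec_eq_smul_of_mul_eq_smul {n R : Type*} [Fintype n] [CommSemiring R]
    {u e : Matrix n n R} {c : R} (he : e ≠ 0) (h : u * e = c • e) :
    ∃ w : n → R, w ≠ 0 ∧ u *ᵥ w = c • w := by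
  obtain ⟨i, j, hij⟩ : ∃ i j, e i j ≠ 0 := by
    by_contra! hzero
    exact he (Matrix.ext hzero)
  refine ⟨fun i => e i j, fun hw => hij (congrFun hw i), ?_⟩
  ext l
  simpa [Matrix.mulVec, dotProduct, Matrix.mul_apply] using congrFun (congrFun h l) j

lemma Complex.exp_two_pi_I_mul_div_pow_self (j k : ℕ) (hk : k ≠ 0) :
    Complex.exp (2 * Real.pi * Complex.I * j / k) ^ k = 1 := by
  rw [← Complex.exp_nat_mul, ← Complex.exp_nat_mul_two_pi_mul_I j]
  congr 1
  field_simp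

/-- For every `k ≥ 1` there is `δ > 0` such that any unitary `u` of order
dividing `k` that approximately cyclically permutes `k` nonzero mutually orthogonal
projections (within `δ`) has every `k`-th root of unity `e^{2πij/k}` as an eigenvalue. -/
theorem stmt_10 (k : ℕ) [NeZero k] :
    ∃ δ : ℝ, 0 < δ ∧
      ∀ (N : ℕ), 0 < N →
        ∀ u : Matrix (Fin N) (Fin N) ℂ, u ∈ Matrix.unitaryGroup (Fin N) ℂ → u ^ k = 1 →
          ∀ p : Fin k → Matrix (Fin N) (Fin N) ℂ,
            (∀ i, p i ≠ 0 ∧ (p i)ᴴ = p i ∧ p i * p i = p i) →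
            (∀ i j, i ≠ j → p i * p j = 0) →
            (∀ i : Fin k, ‖u * p i * uᴴ - p (i + 1)‖ < δ) →
            ∀ j : Fin k, ∃ w : Fin N → ℂ, w ≠ 0 ∧
              u.mulVec w =
                Complex.exp (2 * Real.pi * Complex.I * (j : ℕ) / (k : ℕ)) • w := by
  have hk : (k : ℝ) ≠ 0 := Nat.cast_ne_zero.mpr (NeZero.ne k)
  refine ⟨(2 * (k : ℝ) ^ 2)⁻¹, by positivity, ?_⟩
  intro N _ u hu huk p hp horth hδ j
  obtain ⟨e, he, hue⟩ := exists_ne_zero_mul_eq_smul_of_approx_cyclic hu huk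
    ⟨(hp 0).2.2, (hp 0).2.1⟩ (hp 0).1 (fun i hi => horth 0 i hi.symm) (fun i => (hδ i).le)
    (by field_simp; norm_num) (Complex.exp_two_pi_I_mul_div_pow_self j k (NeZero.ne k))
  exact Matrix.exists_mulVec_eq_smul_of_mul_eq_smul he hue
end
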